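/- arXiv:2512.06782 — 2 statements merged into one kernel-verified Lean document; each statement's English description precedes it below -/
import Mathlib

section
/- Sharp decay rate for reversible random walks: suppose Σ_{j∈N_i} ω_{ij} ≤ μ_i for all i, and let P_μ = Δ_μ + I. Then for any f : V → ℝ^d and any k ∈ ℕ, ∫_G ‖∇_μ P_μ^k f‖₂² dμ ≤ (1 - (2 - λ_N) λ₁)^k ∫_G ‖∇_μ f‖₂² dμ, where λ₁ and λ_N are the smallest nonzero and largest eigenvalues of -Δ_μ respectively. -/
/-!
The weight `g ↦ √μ · g` is an isometry from `ℓ²(μ)` onto Euclidean space, and conjugating `-Δ_μ`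
by it gives a symmetric operator `T` with the same eigenvalues and with `⟪T x, x⟫ = E(g)` for
`x = √μ · g` (summation by parts). Since `P_μ` becomes `1 - T`, in an orthonormal eigenbasis of `T`
one step of the walk multiplies the energy carried by an eigenvalue `λ` by
`(1 - λ)² = 1 - (2 - λ) λ`, which for `λ ≠ 0` is at most `1 - (2 - λ_N) λ₁` because
`λ₁ ≤ λ ≤ λ_N ≤ 2`. The vector-valued energy is the sum of the energies of the coordinates,
and the bound for `P_μ^k` follows by iteration.
-/

open Finset

noncomputable def lapV (n d : ℕ) (ω : Fin n → Fin n → ℝ) (μ : Fin n → ℝ)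
    (f : Fin n → Fin d → ℝ) (i : Fin n) (k : Fin d) : ℝ :=
  (∑ j, ω i j * (f j k - f i k)) / μ i

noncomputable def lapS (n : ℕ) (ω : Fin n → Fin n → ℝ) (μ : Fin n → ℝ)
    (f : Fin n → ℝ) (i : Fin n) : ℝ :=
  (∑ j, ω i j * (f j - f i)) / μ i

def IsEig (n : ℕ) (ω : Fin n → Fin n → ℝ) (μ : Fin n → ℝ) (lam : ℝ) : Prop :=
  ∃ v : Fin n → ℝ, v ≠ 0 ∧ ∀ i, -(lapS n ω μ v i) = lam * v i

def GraphConnected (n : ℕ) (ω : Fin n → Fin n → ℝ) : Prop :=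
  ∀ i j : Fin n, Relation.ReflTransGen (fun a b => 0 < ω a b) i j

noncomputable def dirichletV (n d : ℕ) (ω : Fin n → Fin n → ℝ)
    (f : Fin n → Fin d → ℝ) : ℝ :=
  (1/2) * ∑ i, ∑ j, ω i j * (∑ k, (f j k - f i k) ^ 2)

/-- The random walk operator `P_μ = Δ_μ + I`. -/
noncomputable def rwOp (n d : ℕ) (ω : Fin n → Fin n → ℝ) (μ : Fin n → ℝ)
    (f : Fin n → Fin d → ℝ) : Fin n → Fin d → ℝ :=
  fun i k => lapV n d ω μ f i k + f i k

open Module.End RealInnerProductSpace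

namespace LinearMap.IsSymmetric

variable {E : Type*} [NormedAddCommGroup E] [InnerProductSpace ℝ E] [FiniteDimensional ℝ E]
  {T : E →ₗ[ℝ] E}

theorem inner_map_self_eq_sum (hT : T.IsSymmetric) {n : ℕ} (hn : Module.finrank ℝ E = n)
    (x : E) :
    ⟪T x, x⟫ = ∑ i, hT.eigenvalues hn i * (hT.eigenvectorBasis hn).repr x i ^ 2 := by
  rw [← (hT.eigenvectorBasis hn).repr.inner_map_map, PiLp.inner_apply]
  refine sum_congr rfl fun i _ => ?_
  rw [hT.eigenvectorBasis_apply_self_apply]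
  simp only [RCLike.inner_apply, conj_trivial, RCLike.ofReal_real_eq_id, id_eq]
  ring

theorem inner_map_sub_map_le (hT : T.IsSymmetric) {c : ℝ}
    (hc : ∀ a, HasEigenvalue T a → a * (1 - a) ^ 2 ≤ c * a) (x : E) :
    ⟪T (x - T x), x - T x⟫ ≤ c * ⟪T x, x⟫ := by
  rw [hT.inner_map_self_eq_sum rfl, hT.inner_map_self_eq_sum rfl, mul_sum]
  refine sum_le_sum fun i _ => ?_
  have hi := hc _ (hT.hasEigenvalue_eigenvalues rfl i)
  rw [map_sub, PiLp.sub_apply, hT.eigenvectorBasis_apply_self_apply]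
  simp only [RCLike.ofReal_real_eq_id, id_eq] at hi ⊢
  set a := hT.eigenvalues rfl i
  set r := (hT.eigenvectorBasis rfl).repr x i
  calc a * (r - a * r) ^ 2 = a * (1 - a) ^ 2 * r ^ 2 := by ring
    _ ≤ c * a * r ^ 2 := by gcongr
    _ = c * (a * r ^ 2) := by ring

end LinearMap.IsSymmetric

section Graph

variable {n : ℕ} {ω : Fin n → Fin n → ℝ} {μ : Fin n → ℝ}

noncomputable def dirichletForm (ω : Fin n → Fin n → ℝ) (g h : Fin n → ℝ) : ℝ :=
  (1 / 2) * ∑ i, ∑ j, ω i j * ((g j - g i) * (h j - h i))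

theorem dirichletV_eq_sum_dirichletForm (d : ℕ) (f : Fin n → Fin d → ℝ) :
    dirichletV n d ω f = ∑ k, dirichletForm ω (f · k) (f · k) := by
  simp only [dirichletV, dirichletForm, ← mul_sum]
  congr 1
  simp only [← sq, mul_sum]
  exact (sum_congr rfl fun _ _ => sum_comm).trans sum_comm

theorem dirichletForm_comm (g h : Fin n → ℝ) : dirichletForm ω g h = dirichletForm ω h g := by
  simp only [dirichletForm, mul_comm (g _ - g _)]

theorem dirichletForm_self_nonneg (hnn : ∀ i j, 0 ≤ ω i j) (g : Fin n → ℝ) :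
    0 ≤ dirichletForm ω g g := by
  unfold dirichletForm
  exact mul_nonneg (by norm_num) <| sum_nonneg fun i _ => sum_nonneg fun j _ =>
    mul_nonneg (hnn i j) (mul_self_nonneg _)

theorem sum_swap_of_symm (hsym : ∀ i j, ω i j = ω j i) (F : Fin n → Fin n → ℝ) :
    ∑ i, ∑ j, ω i j * F i j = ∑ i, ∑ j, ω i j * F j i := by
  rw [sum_comm]
  simp only [hsym]

theorem dirichletForm_self_le (hsym : ∀ i j, ω i j = ω j i) (hnn : ∀ i j, 0 ≤ ω i j)
    (hrow : ∀ i, ∑ j, ω i j ≤ μ i) (g : Fin n → ℝ) :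
    dirichletForm ω g g ≤ 2 * ∑ i, μ i * g i ^ 2 := by
  have hsq : ∀ i j, (g j - g i) * (g j - g i) ≤ 2 * g j ^ 2 + 2 * g i ^ 2 :=
    fun i j => by nlinarith [sq_nonneg (g j + g i)]
  have hdeg : ∑ i, ∑ j, ω i j * g i ^ 2 ≤ ∑ i, μ i * g i ^ 2 :=
    sum_le_sum fun i _ => by rw [← sum_mul]; gcongr; exact hrow i
  calc dirichletForm ω g g
      ≤ (1 / 2) * ∑ i, ∑ j, ω i j * (2 * g j ^ 2 + 2 * g i ^ 2) := by
        unfold dirichletForm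
        gcongr with i _ j _
        exacts [hnn i j, hsq i j]
    _ = 2 * ∑ i, ∑ j, ω i j * g i ^ 2 := by
        simp only [mul_add, sum_add_distrib, mul_left_comm (ω _ _) 2, ← mul_sum]
        rw [← sum_swap_of_symm hsym fun i j => g i ^ 2]
        ring
    _ ≤ 2 * ∑ i, μ i * g i ^ 2 := by gcongr

theorem sum_mul_lapS_mul (hsym : ∀ i j, ω i j = ω j i) (hμ : ∀ i, μ i ≠ 0)
    (g h : Fin n → ℝ) : ∑ i, μ i * lapS n ω μ g i * h i = -dirichletForm ω g h := by
  have hlap : ∀ i, μ i * lapS n ω μ g i * h i = ∑ j, ω i j * ((g j - g i) * h i) := fun i => by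
    rw [lapS, mul_div_cancel₀ _ (hμ i), sum_mul]
    exact sum_congr rfl fun j _ => by ring
  have hsplit : ∑ i, ∑ j, ω i j * ((g j - g i) * (h j - h i))
      = -∑ i, ∑ j, ω i j * ((g j - g i) * h i) - ∑ i, ∑ j, ω i j * ((g i - g j) * h j) := by
    simp only [← sum_neg_distrib, ← sum_sub_distrib]
    exact sum_congr rfl fun i _ => sum_congr rfl fun j _ => by ring
  rw [sum_congr rfl fun i _ => hlap i, dirichletForm, hsplit,
    ← sum_swap_of_symm hsym fun i j => (g j - g i) * h i]
  ring

theorem IsEig.mem_Icc (hsym : ∀ i j, ω i j = ω j i) (hnn : ∀ i j, 0 ≤ ω i j)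
    (hμ : ∀ i, 0 < μ i) (hrow : ∀ i, ∑ j, ω i j ≤ μ i) {a : ℝ} (ha : IsEig n ω μ a) :
    a ∈ Set.Icc 0 2 := by
  obtain ⟨v, hv0, hv⟩ := ha
  have hmass : 0 < ∑ i, μ i * v i ^ 2 := by
    obtain ⟨i, hi⟩ := Function.ne_iff.mp hv0
    exact sum_pos' (fun j _ => by have := hμ j; positivity)
      ⟨i, mem_univ i, mul_pos (hμ i) (sq_pos_of_ne_zero hi)⟩
  have hrayleigh : a * ∑ i, μ i * v i ^ 2 = dirichletForm ω v v := by
    rw [← neg_neg (dirichletForm ω v v), ← sum_mul_lapS_mul hsym (fun i => (hμ i).ne'),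
      mul_sum, ← sum_neg_distrib]
    exact sum_congr rfl fun i _ => by linear_combination (-(μ i * v i)) * hv i
  constructor
  · nlinarith [dirichletForm_self_nonneg hnn v]
  · nlinarith [dirichletForm_self_le hsym hnn hrow v]

variable (n ω μ) in
noncomputable def lapL : Module.End ℝ (Fin n → ℝ) where
  toFun := lapS n ω μ
  map_add' g h := by
    ext i
    simp only [lapS, Pi.add_apply, ← add_div, ← sum_add_distrib]
    exact congrArg (· / μ i) (sum_congr rfl fun j _ => by ring)
  map_smul' c g := by
    ext i
    simp only [lapS, Pi.smul_apply, smul_eq_mul, RingHom.id_apply, mul_div_assoc', mul_sum]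
    exact congrArg (· / μ i) (sum_congr rfl fun j _ => by ring)

noncomputable def sqrtScale (hμ : ∀ i, 0 < μ i) : (Fin n → ℝ) ≃ₗ[ℝ] EuclideanSpace ℝ (Fin n) :=
  (LinearEquiv.piCongrRight fun i =>
    LinearEquiv.smulOfNeZero ℝ ℝ (√(μ i)) (Real.sqrt_pos.mpr (hμ i)).ne').trans
    (WithLp.linearEquiv 2 ℝ (Fin n → ℝ)).symm

theorem sqrtScale_apply (hμ : ∀ i, 0 < μ i) (g : Fin n → ℝ) (i : Fin n) :
    sqrtScale hμ g i = √(μ i) * g i :=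
  rfl

theorem inner_sqrtScale (hμ : ∀ i, 0 < μ i) (g h : Fin n → ℝ) :
    ⟪sqrtScale hμ g, sqrtScale hμ h⟫ = ∑ i, μ i * g i * h i := by
  simp only [PiLp.inner_apply, sqrtScale_apply, RCLike.inner_apply, conj_trivial]
  refine sum_congr rfl fun i _ => ?_
  linear_combination g i * h i * Real.mul_self_sqrt (hμ i).le

variable (ω) in
noncomputable def symLap (hμ : ∀ i, 0 < μ i) : Module.End ℝ (EuclideanSpace ℝ (Fin n)) :=
  (sqrtScale hμ).conj (-lapL n ω μ)

theorem symLap_sqrtScale (hμ : ∀ i, 0 < μ i) (g : Fin n → ℝ) :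
    symLap ω hμ (sqrtScale hμ g) = -sqrtScale hμ (lapS n ω μ g) := by
  simp [symLap, lapL]

theorem inner_symLap_sqrtScale (hsym : ∀ i j, ω i j = ω j i) (hμ : ∀ i, 0 < μ i)
    (g h : Fin n → ℝ) :
    ⟪symLap ω hμ (sqrtScale hμ g), sqrtScale hμ h⟫ = dirichletForm ω g h := by
  rw [symLap_sqrtScale, inner_neg_left, inner_sqrtScale,
    sum_mul_lapS_mul hsym fun i => (hμ i).ne', neg_neg]

theorem symLap_isSymmetric (hsym : ∀ i j, ω i j = ω j i) (hμ : ∀ i, 0 < μ i) :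
    (symLap ω hμ).IsSymmetric := by
  intro x y
  obtain ⟨g, rfl⟩ := (sqrtScale hμ).surjective x
  obtain ⟨h, rfl⟩ := (sqrtScale hμ).surjective y
  rw [inner_symLap_sqrtScale hsym, real_inner_comm, inner_symLap_sqrtScale hsym,
    dirichletForm_comm]

theorem isEig_of_hasEigenvalue_symLap (hμ : ∀ i, 0 < μ i) {a : ℝ}
    (ha : HasEigenvalue (symLap ω hμ) a) : IsEig n ω μ a := by
  obtain ⟨x, hx, hx0⟩ := ha.exists_hasEigenvector
  obtain ⟨g, rfl⟩ := (sqrtScale hμ).surjective x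
  refine ⟨g, by simpa using hx0, fun i => ?_⟩
  have := congrArg (· i) (mem_eigenspace_iff.mp hx)
  simp only [symLap_sqrtScale, PiLp.neg_apply, PiLp.smul_apply, sqrtScale_apply, smul_eq_mul] at this
  have hs : √(μ i) ≠ 0 := (Real.sqrt_pos.mpr (hμ i)).ne'
  apply mul_left_cancel₀ hs
  linear_combination this

theorem sqrtScale_lapS_add_self (hμ : ∀ i, 0 < μ i) (g : Fin n → ℝ) :
    sqrtScale hμ (lapS n ω μ g + g) = sqrtScale hμ g - symLap ω hμ (sqrtScale hμ g) := by
  rw [map_add, symLap_sqrtScale, sub_neg_eq_add, add_comm]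

theorem dirichletForm_lapS_add_self_le (hsym : ∀ i j, ω i j = ω j i) (hμ : ∀ i, 0 < μ i)
    {c : ℝ} (hc : ∀ a, IsEig n ω μ a → a * (1 - a) ^ 2 ≤ c * a) (g : Fin n → ℝ) :
    dirichletForm ω (lapS n ω μ g + g) (lapS n ω μ g + g) ≤ c * dirichletForm ω g g := by
  rw [← inner_symLap_sqrtScale hsym hμ, ← inner_symLap_sqrtScale hsym hμ,
    sqrtScale_lapS_add_self]
  exact (symLap_isSymmetric hsym hμ).inner_map_sub_map_le
    (fun a ha => hc a (isEig_of_hasEigenvalue_symLap hμ ha)) _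

theorem dirichletV_rwOp_le (hsym : ∀ i j, ω i j = ω j i) (hμ : ∀ i, 0 < μ i)
    {c : ℝ} (hc : ∀ a, IsEig n ω μ a → a * (1 - a) ^ 2 ≤ c * a) (d : ℕ)
    (f : Fin n → Fin d → ℝ) :
    dirichletV n d ω (rwOp n d ω μ f) ≤ c * dirichletV n d ω f := by
  rw [dirichletV_eq_sum_dirichletForm, dirichletV_eq_sum_dirichletForm, mul_sum]
  exact sum_le_sum fun k _ => dirichletForm_lapS_add_self_le hsym hμ hc (f · k)

end Graph

-- `(2 - a) a - (2 - lₙ) l₁ = (lₙ - a) a + (2 - lₙ) (a - l₁)`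
theorem sq_one_sub_le_of_le {a l₁ lₙ : ℝ} (ha : 0 ≤ a) (h₁ : l₁ ≤ a) (hₙ : a ≤ lₙ)
    (hₙ₂ : lₙ ≤ 2) : (1 - a) ^ 2 ≤ 1 - (2 - lₙ) * l₁ := by
  nlinarith [mul_nonneg ha (sub_nonneg.2 hₙ), mul_nonneg (sub_nonneg.2 hₙ₂) (sub_nonneg.2 h₁)]

theorem rw_dirichlet_decay_general (n d : ℕ) (ω : Fin n → Fin n → ℝ) (μ : Fin n → ℝ)
    (hsym : ∀ i j, ω i j = ω j i) (hnn : ∀ i j, 0 ≤ ω i j)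
    (hμ : ∀ i, 0 < μ i)
    (hrow : ∀ i, (∑ j, ω i j) ≤ μ i)
    (lam1 : ℝ) (hlam1 : IsEig n ω μ lam1)
    (hmin : ∀ lam, IsEig n ω μ lam → lam ≠ 0 → lam1 ≤ lam)
    (lamN : ℝ) (hlamN : IsGreatest {lam | IsEig n ω μ lam} lamN)
    (f : Fin n → Fin d → ℝ) (k : ℕ) :
    dirichletV n d ω ((rwOp n d ω μ)^[k] f)
      ≤ (1 - (2 - lamN) * lam1) ^ k * dirichletV n d ω f := by
  have hspec : ∀ a, IsEig n ω μ a → a ∈ Set.Icc 0 2 := fun a ha =>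
    ha.mem_Icc hsym hnn hμ hrow
  have hlamN₂ : lamN ≤ 2 := (hspec lamN hlamN.1).2
  have hc : ∀ a, IsEig n ω μ a → a * (1 - a) ^ 2 ≤ (1 - (2 - lamN) * lam1) * a := by
    intro a ha
    rcases eq_or_ne a 0 with rfl | ha₀
    · simp
    · rw [mul_comm]
      exact mul_le_mul_of_nonneg_right
        (sq_one_sub_le_of_le (hspec a ha).1 (hmin a ha ha₀) (hlamN.2 ha) hlamN₂) (hspec a ha).1
  have hc₀ : 0 ≤ 1 - (2 - lamN) * lam1 := (sq_nonneg _).trans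
    (sq_one_sub_le_of_le (hspec lam1 hlam1).1 le_rfl (hlamN.2 hlam1) hlamN₂)
  induction k with
  | zero => simp
  | succ k ih =>
    rw [Function.iterate_succ_apply', pow_succ', mul_assoc]
    exact (dirichletV_rwOp_le hsym hμ hc d _).trans (by gcongr)

/-- Sharp decay rate for reversible random walks:
`E(P_μ^k f) ≤ (1 - (2 - λ_N) λ₁)^k E(f)`. -/
theorem rw_dirichlet_decay (n d : ℕ) (ω : Fin n → Fin n → ℝ) (μ : Fin n → ℝ)
    (hsym : ∀ i j, ω i j = ω j i) (hnn : ∀ i j, 0 ≤ ω i j)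
    (hμ : ∀ i, 0 < μ i)
    (hconn : GraphConnected n ω)
    (hrow : ∀ i, (∑ j, ω i j) ≤ μ i)
    (lam1 : ℝ) (hlam1 : IsEig n ω μ lam1) (hne : lam1 ≠ 0)
    (hmin : ∀ lam, IsEig n ω μ lam → lam ≠ 0 → lam1 ≤ lam)
    (lamN : ℝ) (hlamN : IsGreatest {lam | IsEig n ω μ lam} lamN)
    (f : Fin n → Fin d → ℝ) (k : ℕ) :
    dirichletV n d ω ((rwOp n d ω μ)^[k] f)
      ≤ (1 - (2 - lamN) * lam1) ^ k * dirichletV n d ω f :=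
  rw_dirichlet_decay_general n d ω μ hsym hnn hμ hrow lam1 hlam1 hmin lamN hlamN f k
end

section
/- Bipartite characterization of the top eigenvalue: if G = (V, E, ω, μ) is a connected weighted graph with Σ_{j∈N_i} ω_{ij} ≤ μ_i for all i, and -Δ_μ has eigenvalue 2, then G is bipartite and moreover μ_i = Σ_{j∈N_i} ω_{ij} for every node i with nonzero eigenfunction value; in particular, if -Δ_μ admits an eigenfunction v with eigenvalue 2, then v(i) + v(j) = 0 for every edge i ~ j, v is nowhere zero, and the sign sets {v > 0}, {v < 0} give a bipartition of V. -/
open Finset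

/-- Bipartite characterization of the top eigenvalue: on a connected graph with
`Σ_j ω_{ij} ≤ μ_i`, any eigenfunction `v` of `-Δ_μ` with eigenvalue `2` satisfies
`v(i) + v(j) = 0` across every edge, `v` is nowhere zero, `μ_i = Σ_j ω_{ij}` at every
node, and the sign sets of `v` give a bipartition of the vertex set. -/
theorem top_eigenvalue_bipartite (n : ℕ) (ω : Fin n → Fin n → ℝ) (μ : Fin n → ℝ)
    (hsym : ∀ i j, ω i j = ω j i) (hnn : ∀ i j, 0 ≤ ω i j)
    (hμ : ∀ i, 0 < μ i)
    (hconn : GraphConnected n ω)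
    (hrow : ∀ i, (∑ j, ω i j) ≤ μ i)
    (v : Fin n → ℝ) (hv : v ≠ 0) (heig : ∀ i, -(lapS n ω μ v i) = 2 * v i) :
    (∀ i j, 0 < ω i j → v i + v j = 0) ∧
    (∀ i, v i ≠ 0) ∧
    (∀ i, v i ≠ 0 → μ i = ∑ j, ω i j) ∧
    (∀ i j, 0 < ω i j → ((0 < v i ∧ v j < 0) ∨ (v i < 0 ∧ 0 < v j))) := by
  have key : ∀ i, (∑ j, ω i j * (v j - v i)) = -(2 * μ i * v i) := by
    intro i
    have h := heig i
    unfold lapS at h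
    have hne : μ i ≠ 0 := (hμ i).ne'
    field_simp at h
    linarith
  have hT2 : ∑ i, ∑ j, ω i j * ((v j - v i) * v i) = -(2 * ∑ i, μ i * v i ^ 2) := by
    have hper : ∀ i : Fin n, ∑ j, ω i j * ((v j - v i) * v i) = -(2 * (μ i * v i ^ 2)) := by
      intro i
      have e : ∑ j, ω i j * ((v j - v i) * v i) = (∑ j, ω i j * (v j - v i)) * v i := by
        rw [Finset.sum_mul]; exact Finset.sum_congr rfl fun j _ => by ring
      rw [e, key i]; ring
    rw [Finset.sum_congr rfl fun i _ => hper i, Finset.sum_neg_distrib, Finset.mul_sum]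
  have hT1 : ∑ i, ∑ j, ω i j * ((v j - v i) * v j) = 2 * ∑ i, μ i * v i ^ 2 := by
    rw [Finset.sum_comm]
    have hper : ∀ j : Fin n, ∑ i, ω i j * ((v j - v i) * v j) = 2 * (μ j * v j ^ 2) := by
      intro j
      have e : ∑ i, ω i j * ((v j - v i) * v j) = -((∑ i, ω j i * (v i - v j)) * v j) := by
        rw [Finset.sum_mul, ← Finset.sum_neg_distrib]
        exact Finset.sum_congr rfl fun i _ => by rw [hsym i j]; ring
      rw [e, key j]; ring
    rw [Finset.sum_congr rfl fun j _ => hper j, ← Finset.mul_sum]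
  have hB : ∑ i, ∑ j, ω i j * (v j - v i) ^ 2 = 4 * ∑ i, μ i * v i ^ 2 := by
    have e : ∀ i j : Fin n, ω i j * (v j - v i) ^ 2
        = ω i j * ((v j - v i) * v j) - ω i j * ((v j - v i) * v i) := fun i j => by ring
    simp_rw [e, Finset.sum_sub_distrib]
    rw [hT1, hT2]; ring
  have hC : ∑ i, (∑ j, ω i j * (v i + v j) ^ 2 + 4 * (μ i - ∑ j, ω i j) * v i ^ 2) = 0 := by
    have hper : ∀ i : Fin n, ∑ j, ω i j * (v i + v j) ^ 2 + 4 * (μ i - ∑ j, ω i j) * v i ^ 2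
        = ∑ j, ω i j * (v j - v i) ^ 2 - 4 * (μ i * v i ^ 2) := by
      intro i
      have e1 : ∀ j : Fin n, ω i j * (v i + v j) ^ 2
          = ω i j * (v j - v i) ^ 2 + 4 * (ω i j * (v j - v i)) * v i + 4 * ω i j * v i ^ 2 :=
        fun j => by ring
      simp_rw [e1]
      rw [Finset.sum_add_distrib, Finset.sum_add_distrib]
      have e2 : ∑ j, 4 * (ω i j * (v j - v i)) * v i
          = (∑ j, ω i j * (v j - v i)) * (4 * v i) := by
        rw [Finset.sum_mul]; exact Finset.sum_congr rfl fun j _ => by ring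
      have e3 : ∑ j, 4 * ω i j * v i ^ 2 = (∑ j, ω i j) * (4 * v i ^ 2) := by
        rw [Finset.sum_mul]; exact Finset.sum_congr rfl fun j _ => by ring
      rw [e2, e3, key i]; ring
    rw [Finset.sum_congr rfl fun i _ => hper i, Finset.sum_sub_distrib, hB, ← Finset.mul_sum]
    ring
  have hFnonneg : ∀ i : Fin n,
      0 ≤ ∑ j, ω i j * (v i + v j) ^ 2 ∧ 0 ≤ 4 * (μ i - ∑ j, ω i j) * v i ^ 2 := by
    intro i
    constructor
    · exact Finset.sum_nonneg fun j _ => mul_nonneg (hnn i j) (sq_nonneg _)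
    · exact mul_nonneg (by linarith [hrow i]) (sq_nonneg _)
  have hFzero : ∀ i : Fin n,
      ∑ j, ω i j * (v i + v j) ^ 2 + 4 * (μ i - ∑ j, ω i j) * v i ^ 2 = 0 := by
    intro i
    have := (Finset.sum_eq_zero_iff_of_nonneg (fun i _ =>
      add_nonneg (hFnonneg i).1 (hFnonneg i).2)).mp hC i (Finset.mem_univ i)
    exact this
  have hpart1 : ∀ i : Fin n, ∑ j, ω i j * (v i + v j) ^ 2 = 0 := fun i => by
    have h := hFzero i
    have h1 := (hFnonneg i).1
    have h2 := (hFnonneg i).2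
    linarith
  have hpart2 : ∀ i : Fin n, 4 * (μ i - ∑ j, ω i j) * v i ^ 2 = 0 := fun i => by
    have h := hFzero i
    have h1 := (hFnonneg i).1
    have h2 := (hFnonneg i).2
    linarith
  have claim1 : ∀ i j, 0 < ω i j → v i + v j = 0 := by
    intro i j hij
    have := (Finset.sum_eq_zero_iff_of_nonneg (fun j _ =>
      mul_nonneg (hnn i j) (sq_nonneg _))).mp (hpart1 i) j (Finset.mem_univ j)
    have h2 : (v i + v j) ^ 2 = 0 := by
      rcases mul_eq_zero.mp this with h | h
      · exact absurd h hij.ne'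
      · exact h
    exact pow_eq_zero_iff (by norm_num) |>.mp h2
  have claim3 : ∀ i, v i ≠ 0 → μ i = ∑ j, ω i j := by
    intro i hvi
    have h := hpart2 i
    have hv2 : v i ^ 2 ≠ 0 := pow_ne_zero _ hvi
    have : μ i - ∑ j, ω i j = 0 := by
      rcases mul_eq_zero.mp h with h' | h'
      · rcases mul_eq_zero.mp h' with h'' | h''
        · norm_num at h''
        · exact h''
      · exact absurd h' hv2
    linarith
  obtain ⟨i0, hi0⟩ := Function.ne_iff.mp hv
  have hi0' : v i0 ≠ 0 := hi0
  have claim2 : ∀ j, v j ≠ 0 := by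
    intro j
    have h := hconn i0 j
    induction h with
    | refl => exact hi0'
    | tail _ hbc ih =>
      intro h0
      exact ih (by have := claim1 _ _ hbc; linarith)
  refine ⟨claim1, claim2, claim3, ?_⟩
  intro i j hij
  have h := claim1 i j hij
  rcases lt_trichotomy (v i) 0 with h1 | h1 | h1
  · right; exact ⟨h1, by linarith⟩
  · exact absurd h1 (claim2 i)
  · left; exact ⟨h1, by linarith⟩
end
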